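/- arXiv:1507.06107 — 3 statements merged into one kernel-verified Lean document; each statement's English description precedes it below -/
import Mathlib

section
/- Let B = M_n(ℂ) and let ψ(x) = Tr(Qx) be a faithful state on B, where Q is a positive definite matrix. Equip B with the inner product ⟨x,y⟩ = ψ(y*x) and let m : B ⊗ B → B be the multiplication map with Hilbert-space adjoint m*. Then m ∘ m* = Tr(Q⁻¹) · id_B. -/
open scoped TensorProduct ComplexOrder
open Matrix

private theorem traceE' {n : Type} [Fintype n] [DecidableEq n] (k l : n) (M : Matrix n n ℂ) :
    (Matrix.single k l 1 * M).trace = M l k := by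
  simp [Matrix.trace, Matrix.mul_apply, Matrix.single, Matrix.diag, ite_and,
    Finset.sum_ite_eq, Finset.sum_ite_eq']

private theorem sumE' {n : Type} [Fintype n] [DecidableEq n] (M : Matrix n n ℂ) :
    (∑ k : n, ∑ l : n,
      Matrix.single k l (1:ℂ) * M * Matrix.single l k (1:ℂ)) =
      M.trace • (1 : Matrix n n ℂ) := by
  ext i j
  by_cases h : i = j
  · simp [h, Matrix.sum_apply, Matrix.mul_apply, Matrix.single, Matrix.trace,
      Matrix.diag, Matrix.one_apply, ite_and, Finset.sum_ite_eq, Finset.sum_ite_eq', mul_comm]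
  · simp [h, Ne.symm h, Matrix.sum_apply, Matrix.mul_apply, Matrix.single, Matrix.trace,
      Matrix.diag, Matrix.one_apply, ite_and, Finset.sum_ite_eq, Finset.sum_ite_eq']

private theorem conjE' {n : Type} [Fintype n] [DecidableEq n] (k l : n) :
    (Matrix.single k l (1:ℂ))ᴴ = Matrix.single l k (1:ℂ) := by
  ext i j
  simp [Matrix.conjTranspose_apply, Matrix.single, and_comm]

/-- Let `B = Mₙ(ℂ)` with faithful state `ψ(x) = Tr(Qx)`, `Q` positive definite,
inner product `⟨x,y⟩ = ψ(y*x)` (extended to `B ⊗ B` by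
`⟨a⊗b, c⊗d⟩ = ⟨a,c⟩⟨b,d⟩`), `m : B ⊗ B → B` the multiplication and `m*` its
Hilbert-space adjoint.  Then `m ∘ m* = Tr(Q⁻¹) · id`. -/
theorem mul_comp_adjoint_eq_trace_inv_smul
    {n : Type} [Fintype n] [DecidableEq n]
    (Q : Matrix n n ℂ) (hQ : Q.PosDef) (htr : Q.trace = 1)
    (ip : Matrix n n ℂ → Matrix n n ℂ → ℂ)
    (hip : ∀ x y : Matrix n n ℂ, ip x y = (Q * (star y * x)).trace)
    (ip2 : (Matrix n n ℂ ⊗[ℂ] Matrix n n ℂ) → (Matrix n n ℂ ⊗[ℂ] Matrix n n ℂ) → ℂ)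
    (hip2addl : ∀ u v w, ip2 (u + v) w = ip2 u w + ip2 v w)
    (hip2addr : ∀ u v w, ip2 u (v + w) = ip2 u v + ip2 u w)
    (hip2 : ∀ a b c d : Matrix n n ℂ, ip2 (a ⊗ₜ[ℂ] b) (c ⊗ₜ[ℂ] d) = ip a c * ip b d)
    (m : (Matrix n n ℂ ⊗[ℂ] Matrix n n ℂ) →ₗ[ℂ] Matrix n n ℂ)
    (hm : ∀ a b : Matrix n n ℂ, m (a ⊗ₜ[ℂ] b) = a * b)
    (mstar : Matrix n n ℂ →ₗ[ℂ] (Matrix n n ℂ ⊗[ℂ] Matrix n n ℂ))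
    (hmstar : ∀ x u, ip2 (mstar x) u = ip x (m u)) :
    ∀ x, m (mstar x) = Q⁻¹.trace • x := by
  intro x
  have hQQ : Q * Q⁻¹ = 1 := Matrix.mul_nonsing_inv Q (hQ.det_pos.ne'.isUnit)
  have hQi : Q⁻¹ᴴ = Q⁻¹ := hQ.inv.1
  set E : n → n → Matrix n n ℂ := fun k l => Matrix.single k l (1:ℂ) with hE
  have ip_right : ∀ a w : Matrix n n ℂ, ip a (w * Q⁻¹) = (wᴴ * a).trace := by
    intro a w
    rw [hip, Matrix.star_eq_conjTranspose, Matrix.conjTranspose_mul, hQi,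
      ← Matrix.mul_assoc, ← Matrix.mul_assoc, hQQ, Matrix.one_mul]
  have hzero2l : ∀ w, ip2 0 w = 0 := by
    intro w
    have h := hip2addl 0 0 w
    rw [add_zero] at h
    exact (left_eq_add.mp h)
  have hzero2r : ∀ w, ip2 w 0 = 0 := by
    intro w
    have h := hip2addr w 0 0
    rw [add_zero] at h
    exact (left_eq_add.mp h)
  have hsumr : ∀ (u : Matrix n n ℂ ⊗[ℂ] Matrix n n ℂ) {ι : Type} (s : Finset ι)
      (f : ι → Matrix n n ℂ ⊗[ℂ] Matrix n n ℂ),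
      ip2 u (∑ i ∈ s, f i) = ∑ i ∈ s, ip2 u (f i) := by
    intro u ι s f
    induction s using Finset.cons_induction with
    | empty => simpa using hzero2r u
    | cons a s ha ih => rw [Finset.sum_cons, Finset.sum_cons, hip2addr, ih]
  set U : Matrix n n ℂ → Matrix n n ℂ ⊗[ℂ] Matrix n n ℂ := fun y =>
    ∑ k : n, ∑ l : n, (y * Q * E k l * Q⁻¹) ⊗ₜ[ℂ] (E l k * Q⁻¹) with hU
  have hA : ∀ (y : Matrix n n ℂ) (t : Matrix n n ℂ ⊗[ℂ] Matrix n n ℂ),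
      ip2 t (U y) = ip (m t) y := by
    intro y t
    induction t using TensorProduct.induction_on with
    | zero => rw [hzero2l, map_zero, hip]; simp
    | tmul a b =>
        rw [hm, hip]
        have expand : ip2 (a ⊗ₜ[ℂ] b) (U y)
            = ∑ k : n, ∑ l : n, ip a (y * Q * E k l * Q⁻¹) * ip b (E l k * Q⁻¹) := by
          rw [hU]
          rw [hsumr]
          refine Finset.sum_congr rfl fun k _ => ?_
          rw [hsumr]
          exact Finset.sum_congr rfl fun l _ => hip2 _ _ _ _
        rw [expand]
        have h1 : ∀ k l : n, ip a (y * Q * E k l * Q⁻¹) = (Q * yᴴ * a) k l := by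
          intro k l
          rw [ip_right, Matrix.conjTranspose_mul, Matrix.conjTranspose_mul, hE]
          rw [conjE', Matrix.mul_assoc, Matrix.mul_assoc, ← Matrix.mul_assoc (Q)ᴴ yᴴ a,
            traceE', hQ.1]
        have h2 : ∀ k l : n, ip b (E l k * Q⁻¹) = b l k := by
          intro k l
          rw [ip_right, hE, conjE', traceE']
        simp only [h1, h2]
        rw [Matrix.star_eq_conjTranspose, ← Matrix.mul_assoc, ← Matrix.mul_assoc]
        simp [Matrix.trace, Matrix.mul_apply, Matrix.diag]
    | add u v hu hv =>
        rw [hip2addl, map_add, hu, hv, hip, hip, hip]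
        simp [Matrix.mul_add]
  have hmU : ∀ y : Matrix n n ℂ, m (U y) = Q⁻¹.trace • y := by
    intro y
    rw [hU]
    simp only [map_sum, hm]
    rw [show (∑ k : n, ∑ l : n, (y * Q * E k l * Q⁻¹) * (E l k * Q⁻¹))
        = y * Q * (∑ k : n, ∑ l : n, E k l * Q⁻¹ * E l k) * Q⁻¹ by
      simp [Finset.mul_sum, Finset.sum_mul, Matrix.mul_assoc]]
    rw [hE]
    rw [sumE']
    rw [Matrix.mul_smul, Matrix.smul_mul, Matrix.mul_one, Matrix.mul_assoc, hQQ, Matrix.mul_one]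
  have key : ∀ y : Matrix n n ℂ, ip (m (mstar x)) y = Q⁻¹.trace * ip x y := by
    intro y
    rw [← hA y (mstar x), hmstar, hmU, hip, hip]
    have hc : star Q⁻¹.trace = Q⁻¹.trace := by
      rw [← Matrix.trace_conjTranspose, hQi]
    rw [star_smul, Matrix.smul_mul, Matrix.mul_smul, Matrix.trace_smul, hc, smul_eq_mul]
  ext i j
  have h := key (E i j * Q⁻¹)
  rw [ip_right, ip_right, hE, conjE', traceE', traceE'] at h
  simpa using h
end

section
/- Let B, B' be finite dimensional Hilbert spaces, where B carries an associative multiplication m with mm* = δ·id_B. For k,l ≥ 1 and T ∈ L(B'^{⊗k}, B'^{⊗l}) define φ_{k,l}(T) = Σ_l* ∘ ((m^(l))* m^(k) ⊗ T) ∘ Σ_k, where Σ_k : (B ⊗ B')^{⊗k} → B^{⊗k} ⊗ B'^{⊗k} is the canonical shuffle unitary. Then: (i) φ_{l,t}(S) ∘ φ_{k,l}(T) = δ^{l-1} φ_{k,t}(S ∘ T) for all composable S, T; and (ii) φ_{k,l}(T)* = φ_{l,k}(T*). -/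
/-!
Everything is computed on pure tensors after conjugating by the shuffles. For (i) the shuffles in
the middle cancel and the `B`-legs compose to
`(m^(t))* m^(l) (m^(l))* m^(k) = δ^(l-1) (m^(t))* m^(k)`.
For (ii), the pairing on `(B ⊗ B')^{⊗n}` pulled back along the shuffle is the product of the
pairings on `B^{⊗n}` and `B'^{⊗n}`, so the adjoint of `X ⊗ T` is `X* ⊗ T*`; and
`((m^(l))* m^(k))* = (m^(k))* m^(l)` by conjugate symmetry.
-/

open scoped TensorProduct

noncomputable section

/-- Left-nested tensor powers: `LPow X n = X^{⊗(n+1)}`. -/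
def LPow (X : Type) [AddCommGroup X] [Module ℂ X] : ℕ → ModuleCat ℂ
  | 0 => ModuleCat.of ℂ X
  | (n + 1) => ModuleCat.of ℂ ((LPow X n : Type) ⊗[ℂ] X)

variable (B B' : Type)
  [NormedAddCommGroup B] [InnerProductSpace ℂ B] [FiniteDimensional ℂ B]
  [NormedAddCommGroup B'] [InnerProductSpace ℂ B'] [FiniteDimensional ℂ B']

variable (m : (B ⊗[ℂ] B) →ₗ[ℂ] B)

/-- The iterated multiplication `m^{(n+1)} : B^{⊗(n+1)} → B`. -/
def IterMul : ∀ n : ℕ, ↥(LPow B n) →ₗ[ℂ] B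
  | 0 => LinearMap.id
  | (n + 1) => m ∘ₗ (TensorProduct.map (IterMul n) LinearMap.id)

/-- The canonical shuffle `Σ_{k+1} : (B ⊗ B')^{⊗(k+1)} ≃ B^{⊗(k+1)} ⊗ B'^{⊗(k+1)}`. -/
def shuffle : ∀ k : ℕ, ↥(LPow (B ⊗[ℂ] B') k) ≃ₗ[ℂ] (↥(LPow B k) ⊗[ℂ] ↥(LPow B' k))
  | 0 => LinearEquiv.refl ℂ (B ⊗[ℂ] B')
  | (k + 1) =>
      (TensorProduct.congr (shuffle k) (LinearEquiv.refl ℂ (B ⊗[ℂ] B'))).trans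
        (TensorProduct.tensorTensorTensorComm ℂ ↥(LPow B k) ↥(LPow B' k) B B')

/-- The map `φ_{k,l}(T) = Σ_l* ∘ ((m^{(l)})* m^{(k)} ⊗ T) ∘ Σ_k` of the paper
(indices shifted by one: here `k, l` correspond to `k+1, l+1`). -/
def phi (Mstar : ∀ n : ℕ, B →ₗ[ℂ] ↥(LPow B n)) (k l : ℕ)
    (T : ↥(LPow B' k) →ₗ[ℂ] ↥(LPow B' l)) :
    ↥(LPow (B ⊗[ℂ] B') k) →ₗ[ℂ] ↥(LPow (B ⊗[ℂ] B') l) :=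
  (shuffle B B' l).symm.toLinearMap ∘ₗ
    (TensorProduct.map ((Mstar l) ∘ₗ (IterMul B m k)) T) ∘ₗ
      (shuffle B B' k).toLinearMap

open scoped ComplexConjugate

theorem TensorProduct.eq_of_add_of_tmul {R M N A : Type*} [CommSemiring R] [AddCommMonoid M]
    [Module R M] [AddCommMonoid N] [Module R N] [AddCommGroup A] {f g : M ⊗[R] N → A}
    (hf : ∀ x y, f (x + y) = f x + f y) (hg : ∀ x y, g (x + y) = g x + g y)
    (h : ∀ m n, f (m ⊗ₜ n) = g (m ⊗ₜ n)) (x : M ⊗[R] N) : f x = g x := by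
  induction x using TensorProduct.induction_on with
  | zero => exact (map_zero (AddMonoidHom.mk' f hf)).trans (map_zero (AddMonoidHom.mk' g hg)).symm
  | tmul m n => exact h m n
  | add x y hx hy => rw [hf, hg, hx, hy]

/-- The version of `TensorProduct.eq_of_add_of_tmul` whose additivity hypotheses are stated for
the addition of `LPow X (n + 1)`, which is not reducibly the one of `LPow X n ⊗ X`. -/
theorem LPow.eq_of_add_of_tmul {X A : Type} [AddCommGroup X] [Module ℂ X] [AddCommGroup A]
    {n : ℕ} {f g : LPow X (n + 1) → A} (hf : ∀ x y, f (x + y) = f x + f y)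
    (hg : ∀ x y, g (x + y) = g x + g y) (h : ∀ (u : LPow X n) (a : X), f (u ⊗ₜ a) = g (u ⊗ₜ a)) :
    ∀ x, f x = g x :=
  TensorProduct.eq_of_add_of_tmul (M := LPow X n) (N := X) hf hg h

structure IsTensorPowerPairing {X : Type} [AddCommGroup X] [Module ℂ X] (ip : X → X → ℂ)
    (ipL : ∀ n, LPow X n → LPow X n → ℂ) : Prop where
  at_zero : ∀ a b : X, ipL 0 a b = ip a b
  add_left : ∀ n u v w, ipL n (u + v) w = ipL n u w + ipL n v w
  add_right : ∀ n u v w, ipL n u (v + w) = ipL n u v + ipL n u w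
  tmul_tmul : ∀ n (u v : LPow X n) (a b : X),
    ipL (n + 1) (u ⊗ₜ[ℂ] a) (v ⊗ₜ[ℂ] b) = ipL n u v * ip a b

namespace IsTensorPowerPairing

variable {X : Type} [AddCommGroup X] [Module ℂ X] {ip : X → X → ℂ}
  {ipL : ∀ n, LPow X n → LPow X n → ℂ}

theorem conj_symm (h : IsTensorPowerPairing ip ipL) (hconj : ∀ x y, ip y x = conj (ip x y)) :
    ∀ n (u v : LPow X n), ipL n v u = conj (ipL n u v)
  | 0, u, v => (h.at_zero v u).trans <| (hconj u v).trans (congrArg conj (h.at_zero u v).symm)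
  | n + 1, u, v => by
    revert u
    refine LPow.eq_of_add_of_tmul (fun _ _ => h.add_right ..)
      (fun _ _ => by rw [h.add_left, map_add]) fun a a' => ?_
    revert v
    refine LPow.eq_of_add_of_tmul (fun _ _ => h.add_left ..)
      (fun _ _ => by erw [h.add_right, map_add]) fun b b' => ?_
    rw [h.tmul_tmul, h.tmul_tmul, conj_symm h hconj n a b, hconj, map_mul]

end IsTensorPowerPairing

section Shuffle

variable {E F : Type} [NormedAddCommGroup E] [InnerProductSpace ℂ E]
  [NormedAddCommGroup F] [InnerProductSpace ℂ F]

theorem shuffle_symm_tmul_tmul (n : ℕ) (a : LPow E n) (a' : E) (b : LPow F n) (b' : F) :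
    (shuffle E F (n + 1)).symm
        ((a ⊗ₜ[ℂ] a' : LPow E (n + 1)) ⊗ₜ[ℂ] (b ⊗ₜ[ℂ] b' : LPow F (n + 1))) =
      ((shuffle E F n).symm (a ⊗ₜ[ℂ] b) : LPow (E ⊗[ℂ] F) n) ⊗ₜ[ℂ] (a' ⊗ₜ[ℂ] b') :=
  rfl

variable {ipE : E → E → ℂ} {ipF : F → F → ℂ} {ipC : E ⊗[ℂ] F → E ⊗[ℂ] F → ℂ}
  {ipLE : ∀ n, LPow E n → LPow E n → ℂ} {ipLF : ∀ n, LPow F n → LPow F n → ℂ}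
  {ipLC : ∀ n, LPow (E ⊗[ℂ] F) n → LPow (E ⊗[ℂ] F) n → ℂ}

theorem IsTensorPowerPairing.shuffle_symm_tmul (hC : IsTensorPowerPairing ipC ipLC)
    (hE : IsTensorPowerPairing ipE ipLE) (hF : IsTensorPowerPairing ipF ipLF)
    (hCtmul : ∀ (a c : E) (b d : F), ipC (a ⊗ₜ[ℂ] b) (c ⊗ₜ[ℂ] d) = ipE a c * ipF b d) :
    ∀ n (a c : LPow E n) (b d : LPow F n),
      ipLC n ((shuffle E F n).symm (a ⊗ₜ[ℂ] b)) ((shuffle E F n).symm (c ⊗ₜ[ℂ] d)) =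
        ipLE n a c * ipLF n b d
  | 0, a, c, b, d => (hC.at_zero _ _).trans <| (hCtmul a c b d).trans <|
      congrArg₂ (· * ·) (hE.at_zero a c).symm (hF.at_zero b d).symm
  | n + 1, a, c, b, d => by
    revert a
    refine LPow.eq_of_add_of_tmul
      (fun _ _ => by rw [TensorProduct.add_tmul, map_add, hC.add_left])
      (fun _ _ => by rw [hE.add_left, add_mul]) fun a a' => ?_
    revert b
    refine LPow.eq_of_add_of_tmul
      (fun _ _ => by erw [TensorProduct.tmul_add, map_add, hC.add_left])
      (fun _ _ => by rw [hF.add_left, mul_add]) fun b b' => ?_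
    revert c
    refine LPow.eq_of_add_of_tmul
      (fun _ _ => by rw [TensorProduct.add_tmul, map_add, hC.add_right])
      (fun _ _ => by erw [hE.add_right, add_mul]) fun c c' => ?_
    revert d
    refine LPow.eq_of_add_of_tmul
      (fun _ _ => by erw [TensorProduct.tmul_add, map_add, hC.add_right])
      (fun _ _ => by erw [hF.add_right, mul_add]) fun d d' => ?_
    rw [shuffle_symm_tmul_tmul, shuffle_symm_tmul_tmul, hC.tmul_tmul,
      hC.shuffle_symm_tmul hE hF hCtmul n, hCtmul, hE.tmul_tmul, hF.tmul_tmul]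
    ring

theorem IsTensorPowerPairing.shuffle_symm_map_adjoint (hC : IsTensorPowerPairing ipC ipLC)
    (hE : IsTensorPowerPairing ipE ipLE) (hF : IsTensorPowerPairing ipF ipLF)
    (hCtmul : ∀ (a c : E) (b d : F), ipC (a ⊗ₜ[ℂ] b) (c ⊗ₜ[ℂ] d) = ipE a c * ipF b d)
    {k l : ℕ} {A : LPow E l →ₗ[ℂ] LPow E k} {A' : LPow E k →ₗ[ℂ] LPow E l}
    (hA : ∀ u v, ipLE k (A u) v = ipLE l u (A' v))
    {S : LPow F l →ₗ[ℂ] LPow F k} {T : LPow F k →ₗ[ℂ] LPow F l}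
    (hS : ∀ u v, ipLF k (S u) v = ipLF l u (T v))
    (x : LPow E l ⊗[ℂ] LPow F l) (y : LPow E k ⊗[ℂ] LPow F k) :
    ipLC k ((shuffle E F k).symm (TensorProduct.map A S x)) ((shuffle E F k).symm y) =
      ipLC l ((shuffle E F l).symm x) ((shuffle E F l).symm (TensorProduct.map A' T y)) := by
  revert x
  refine TensorProduct.eq_of_add_of_tmul (fun _ _ => by rw [map_add, map_add, hC.add_left])
    (fun _ _ => by rw [map_add, hC.add_left]) fun a b => ?_
  revert y
  refine TensorProduct.eq_of_add_of_tmul (fun _ _ => by rw [map_add, hC.add_right])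
    (fun _ _ => by rw [map_add, map_add, hC.add_right]) fun c d => ?_
  rw [TensorProduct.map_tmul, TensorProduct.map_tmul, hC.shuffle_symm_tmul hE hF hCtmul,
    hC.shuffle_symm_tmul hE hF hCtmul, hA, hS]

theorem IsTensorPowerPairing.mstar_iterMul_adjoint (hE : IsTensorPowerPairing ipE ipLE)
    (hconj : ∀ x y, ipE y x = conj (ipE x y)) {m : E ⊗[ℂ] E →ₗ[ℂ] E}
    {Mstar : ∀ n, E →ₗ[ℂ] LPow E n}
    (hadj : ∀ n x u, ipLE n (Mstar n x) u = ipE x (IterMul E m n u))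
    (k l : ℕ) (u : LPow E l) (v : LPow E k) :
    ipLE k (Mstar k (IterMul E m l u)) v = ipLE l u (Mstar l (IterMul E m k v)) := by
  rw [hadj, hE.conj_symm hconj l (Mstar l _) u, hadj, hconj]

theorem phi_comp (m : E ⊗[ℂ] E →ₗ[ℂ] E) (Mstar : ∀ n, E →ₗ[ℂ] LPow E n) {k l t : ℕ} {c : ℂ}
    (hc : ∀ x, IterMul E m l (Mstar l x) = c • x)
    (T : LPow F k →ₗ[ℂ] LPow F l) (S : LPow F l →ₗ[ℂ] LPow F t) :
    phi E F m Mstar l t S ∘ₗ phi E F m Mstar k l T = c • phi E F m Mstar k t (S ∘ₗ T) := by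
  have hmid : (Mstar t ∘ₗ IterMul E m l) ∘ₗ (Mstar l ∘ₗ IterMul E m k) =
      c • (Mstar t ∘ₗ IterMul E m k) :=
    LinearMap.ext fun x => by simp [hc]
  refine LinearMap.ext fun x => ?_
  simp only [phi, LinearMap.comp_apply, LinearEquiv.coe_coe, LinearEquiv.apply_symm_apply,
    LinearMap.smul_apply, ← LinearMap.comp_apply (TensorProduct.map _ _), ← TensorProduct.map_comp,
    hmid, TensorProduct.map_smul_left, map_smul]

theorem phi_adjoint (hC : IsTensorPowerPairing ipC ipLC)
    (hE : IsTensorPowerPairing ipE ipLE) (hF : IsTensorPowerPairing ipF ipLF)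
    (hCtmul : ∀ (a c : E) (b d : F), ipC (a ⊗ₜ[ℂ] b) (c ⊗ₜ[ℂ] d) = ipE a c * ipF b d)
    (hconj : ∀ x y, ipE y x = conj (ipE x y)) {m : E ⊗[ℂ] E →ₗ[ℂ] E}
    {Mstar : ∀ n, E →ₗ[ℂ] LPow E n}
    (hadj : ∀ n x u, ipLE n (Mstar n x) u = ipE x (IterMul E m n u))
    {k l : ℕ} {T : LPow F k →ₗ[ℂ] LPow F l} {Tst : LPow F l →ₗ[ℂ] LPow F k}
    (hTst : ∀ u v, ipLF k (Tst u) v = ipLF l u (T v))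
    (u : LPow (E ⊗[ℂ] F) l) (v : LPow (E ⊗[ℂ] F) k) :
    ipLC k (phi E F m Mstar l k Tst u) v = ipLC l u (phi E F m Mstar k l T v) := by
  simpa only [phi, LinearMap.comp_apply, LinearEquiv.coe_coe, LinearEquiv.symm_apply_apply] using
    hC.shuffle_symm_map_adjoint hE hF hCtmul (hE.mstar_iterMul_adjoint hconj hadj k l) hTst
      (shuffle E F l u) (shuffle E F k v)

end Shuffle

theorem phi_comp_and_adjoint
    (δ : ℝ)
    -- the inner product on `B`, `B'`, `B ⊗ B'` and all tensor powers, in the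
    -- convention `⟨x,y⟩ = ψ(y*x)` (linear in the first variable)
    (ipB : B → B → ℂ) (ipB' : B' → B' → ℂ)
    (hBconj : ∀ x y, ipB y x = starRingEnd ℂ (ipB x y))
    (ipC : (B ⊗[ℂ] B') → (B ⊗[ℂ] B') → ℂ)
    (hCpure : ∀ (a c : B) (b d : B'), ipC (a ⊗ₜ[ℂ] b) (c ⊗ₜ[ℂ] d) = ipB a c * ipB' b d)
    (ipLB : ∀ n, ↥(LPow B n) → ↥(LPow B n) → ℂ)
    (hLB0 : ∀ a b : B, ipLB 0 a b = ipB a b)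
    (hLBaddl : ∀ n u v w, ipLB n (u + v) w = ipLB n u w + ipLB n v w)
    (hLBaddr : ∀ n u v w, ipLB n u (v + w) = ipLB n u v + ipLB n u w)
    (hLBpure : ∀ n (u v : ↥(LPow B n)) (a b : B),
      ipLB (n + 1) (u ⊗ₜ[ℂ] a) (v ⊗ₜ[ℂ] b) = ipLB n u v * ipB a b)
    (ipLB' : ∀ n, ↥(LPow B' n) → ↥(LPow B' n) → ℂ)
    (hLB'0 : ∀ a b : B', ipLB' 0 a b = ipB' a b)
    (hLB'addl : ∀ n u v w, ipLB' n (u + v) w = ipLB' n u w + ipLB' n v w)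
    (hLB'addr : ∀ n u v w, ipLB' n u (v + w) = ipLB' n u v + ipLB' n u w)
    (hLB'pure : ∀ n (u v : ↥(LPow B' n)) (a b : B'),
      ipLB' (n + 1) (u ⊗ₜ[ℂ] a) (v ⊗ₜ[ℂ] b) = ipLB' n u v * ipB' a b)
    (ipLC : ∀ n, ↥(LPow (B ⊗[ℂ] B') n) → ↥(LPow (B ⊗[ℂ] B') n) → ℂ)
    (hLC0 : ∀ a b : B ⊗[ℂ] B', ipLC 0 a b = ipC a b)
    (hLCaddl : ∀ n u v w, ipLC n (u + v) w = ipLC n u w + ipLC n v w)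
    (hLCaddr : ∀ n u v w, ipLC n u (v + w) = ipLC n u v + ipLC n u w)
    (hLCpure : ∀ n (u v : ↥(LPow (B ⊗[ℂ] B') n)) (a b : B ⊗[ℂ] B'),
      ipLC (n + 1) (u ⊗ₜ[ℂ] a) (v ⊗ₜ[ℂ] b) = ipLC n u v * ipC a b)
    -- the adjoints `(m^{(n+1)})*` of the iterated multiplications
    (Mstar : ∀ n : ℕ, B →ₗ[ℂ] ↥(LPow B n))
    (hadj : ∀ n (x : B) (u : ↥(LPow B n)), ipLB n (Mstar n x) u = ipB x (IterMul B m n u))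
    -- `m^{(l)} (m^{(l)})* = δ^{l-1} · id`
    (hdelta : ∀ (j : ℕ) (x : B), IterMul B m j (Mstar j x) = ((δ : ℂ) ^ j) • x)
    -- a map `T` together with its adjoint `T*`
    (k l : ℕ) (T : ↥(LPow B' k) →ₗ[ℂ] ↥(LPow B' l)) (Tst : ↥(LPow B' l) →ₗ[ℂ] ↥(LPow B' k))
    (hTst : ∀ (u : ↥(LPow B' l)) (v : ↥(LPow B' k)), ipLB' k (Tst u) v = ipLB' l u (T v)) :
    -- (i) the composition formula
    (∀ (k' l' t' : ℕ) (T' : ↥(LPow B' k') →ₗ[ℂ] ↥(LPow B' l'))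
        (S' : ↥(LPow B' l') →ₗ[ℂ] ↥(LPow B' t')),
      (phi B B' m Mstar l' t' S') ∘ₗ (phi B B' m Mstar k' l' T') =
        ((δ : ℂ) ^ l') • phi B B' m Mstar k' t' (S' ∘ₗ T')) ∧
    -- (ii) `φ_{l,k}(T*)` is the adjoint of `φ_{k,l}(T)`
    (∀ (u : ↥(LPow (B ⊗[ℂ] B') l)) (v : ↥(LPow (B ⊗[ℂ] B') k)),
      ipLC k (phi B B' m Mstar l k Tst u) v = ipLC l u (phi B B' m Mstar k l T v)) := by
  have hB : IsTensorPowerPairing ipB ipLB := ⟨hLB0, hLBaddl, hLBaddr, hLBpure⟩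
  have hB' : IsTensorPowerPairing ipB' ipLB' := ⟨hLB'0, hLB'addl, hLB'addr, hLB'pure⟩
  have hC : IsTensorPowerPairing ipC ipLC := ⟨hLC0, hLCaddl, hLCaddr, hLCpure⟩
  exact ⟨fun _ l' _ T' S' => phi_comp m Mstar (hdelta l') T' S',
    phi_adjoint hC hB hB' hCpure hBconj hadj hTst⟩

end
end

section
/- Let p ∈ NC(k,l) and q ∈ NC(l,w) be noncrossing partitions, with b(p), b(q), b(qp) their numbers of blocks, cb(p,q) the number of central blocks removed in the composition qp, and define cy(p,q) = l + b(qp) + cb(p,q) − b(p) − b(q). Then for the tensor product of partitions, cy is additive: if also p' ∈ NC(k',l') and q' ∈ NC(l',w'), then cy(p ⊗ p', q ⊗ q') = cy(p,q) + cy(p',q'). -/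
/-! Noncrossing partitions `NC(k,l)` between `k` upper and `l` lower points,
their tensor product (horizontal concatenation), composition, block counts,
central blocks, and the number of cycles `cy`. -/

/-- The points of a partition in `NC(k,l)`: `k` upper points and `l` lower points. -/
abbrev NCPt (k l : ℕ) : Type := Fin k ⊕ Fin l

/-- The disjoint union of two setoids (partitions). -/
def sumSetoid {α β : Type*} (s : Setoid α) (t : Setoid β) : Setoid (α ⊕ β) where
  r x y :=
    match x, y with
    | .inl a, .inl b => s.r a b
    | .inr a, .inr b => t.r a b
    | _, _ => False
  iseqv := by
    refine ⟨?_, ?_, ?_⟩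
    · rintro (a | a)
      · exact s.iseqv.refl a
      · exact t.iseqv.refl a
    · rintro (a | a) (b | b) h
      · exact s.iseqv.symm h
      · exact h.elim
      · exact h.elim
      · exact t.iseqv.symm h
    · rintro (a | a) (b | b) (c | c) h₁ h₂
      · exact s.iseqv.trans h₁ h₂
      · exact h₂.elim
      · exact h₁.elim
      · exact h₁.elim
      · exact h₁.elim
      · exact h₁.elim
      · exact h₂.elim
      · exact t.iseqv.trans h₁ h₂

/-- The setoid whose classes are singletons. -/
def discreteSetoid (α : Type*) : Setoid α := ⟨Eq, eq_equivalence⟩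

/-- The numbering of the points of `NC(k,l)`: the upper points are numbered
`0, ..., k-1` from left to right and the lower points are numbered
`k, ..., k+l-1` from right to left. -/
def NCPt.num {k l : ℕ} : NCPt k l → ℕ
  | .inl i => (i : ℕ)
  | .inr j => k + l - 1 - (j : ℕ)

/-- A partition `p` of the points of `NC(k,l)` is noncrossing if there are no four
points `a, b, c, d`, in increasing order of numbering, with `a, c` in one block,
`b, d` in one block, but `a, b` in different blocks. -/
def IsNoncrossing {k l : ℕ} (p : Setoid (NCPt k l)) : Prop :=
  ∀ a b c d : NCPt k l, a.num < b.num → b.num < c.num → c.num < d.num →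
    p.r a c → p.r b d → p.r a b

/-- The number of blocks `b(p)` of a partition. -/
noncomputable def nblocks {α : Type*} (p : Setoid α) : ℕ := Nat.card (Quotient p)

/-- The join of `p ∈ NC(k,l)` and `q ∈ NC(l,w)` on the glued set of
`k` upper, `l` middle and `w` lower points: the equivalence relation generated
by `p` and `q` after identifying the lower points of `p` with the upper points
of `q`. -/
def glue {k l w : ℕ} (p : Setoid (NCPt k l)) (q : Setoid (NCPt l w)) :
    Setoid ((Fin k ⊕ Fin l) ⊕ Fin w) :=
  (sumSetoid p (discreteSetoid (Fin w))) ⊔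
    (Setoid.comap (Equiv.sumAssoc (Fin k) (Fin l) (Fin w))
      (sumSetoid (discreteSetoid (Fin k)) q))

/-- The composition `qp ∈ NC(k,w)` of `p ∈ NC(k,l)` and `q ∈ NC(l,w)`: restrict the
glued partition to the outer (non-middle) points. -/
def compPartition {k l w : ℕ} (p : Setoid (NCPt k l)) (q : Setoid (NCPt l w)) :
    Setoid (NCPt k w) :=
  Setoid.comap (Sum.map Sum.inl id) (glue p q)

/-- The number of central blocks `cb(p,q)`: the blocks of the glued partition
consisting only of middle points. -/
noncomputable def cb {k l w : ℕ} (p : Setoid (NCPt k l)) (q : Setoid (NCPt l w)) : ℕ :=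
  Nat.card {c : Quotient (glue p q) //
    ∀ x : (Fin k ⊕ Fin l) ⊕ Fin w, Quotient.mk (glue p q) x = c →
      ∃ j : Fin l, x = Sum.inl (Sum.inr j)}

/-- The number of cycles appearing in the composition of `p ∈ NC(k,l)` with
`q ∈ NC(l,w)`: `cy(p,q) = l + b(qp) + cb(p,q) − b(p) − b(q)`. -/
noncomputable def cy {k l w : ℕ} (p : Setoid (NCPt k l)) (q : Setoid (NCPt l w)) : ℤ :=
  (l : ℤ) + (nblocks (compPartition p q) : ℤ) + (cb p q : ℤ)
    - (nblocks p : ℤ) - (nblocks q : ℤ)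

/-- The tensor product (horizontal concatenation) `p ⊗ p' ∈ NC(k+k', l+l')` of
`p ∈ NC(k,l)` and `p' ∈ NC(k',l')`. -/
def tensorPartition {k l k' l' : ℕ} (p : Setoid (NCPt k l)) (p' : Setoid (NCPt k' l')) :
    Setoid (NCPt (k + k') (l + l')) :=
  Setoid.comap
    (fun x => (Equiv.sumSumSumComm (Fin k) (Fin k') (Fin l) (Fin l'))
      ((Equiv.sumCongr finSumFinEquiv.symm finSumFinEquiv.symm) x))
    (sumSetoid p p')

/-! Tensoring places `(p, q)` and `(p', q')` side by side, and the equivalence relation generated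
in the composition never links the two halves: after relabelling the glued points, the
glued partition of `(p ⊗ p', q ⊗ q')` is the disjoint union of the glued partitions of `(p, q)`
and `(p', q')`. Hence `l`, `b(p)`, `b(q)`, `b(qp)` and `cb(p, q)` are all additive, and so is
`cy`. The disjoint-union claim follows from `(s ⊔ s') ⊕ (t ⊔ t') = (s ⊕ t) ⊔ (s' ⊕ t')`, since
`sumSetoid` is the lower adjoint of restriction to the two summands. -/

section
variable {α β : Type*}

@[simp] theorem sumSetoid_inl_inl {s : Setoid α} {t : Setoid β} (a b : α) :
    sumSetoid s t (.inl a) (.inl b) ↔ s a b := Iff.rfl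

@[simp] theorem sumSetoid_inr_inr {s : Setoid α} {t : Setoid β} (a b : β) :
    sumSetoid s t (.inr a) (.inr b) ↔ t a b := Iff.rfl

@[simp] theorem sumSetoid_inl_inr {s : Setoid α} {t : Setoid β} (a : α) (b : β) :
    ¬ sumSetoid s t (.inl a) (.inr b) := id

@[simp] theorem sumSetoid_inr_inl {s : Setoid α} {t : Setoid β} (a : β) (b : α) :
    ¬ sumSetoid s t (.inr a) (.inl b) := id

@[simp] theorem discreteSetoid_rel (a b : α) : discreteSetoid α a b ↔ a = b := Iff.rfl

theorem gc_sumSetoid_comap :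
    GaloisConnection (fun st : Setoid α × Setoid β => sumSetoid st.1 st.2)
      (fun r => (Setoid.comap Sum.inl r, Setoid.comap Sum.inr r)) := by
  refine fun st r => ⟨fun h => ⟨fun a b hab => h (x := .inl a) (y := .inl b) hab,
    fun a b hab => h (x := .inr a) (y := .inr b) hab⟩, fun h => ?_⟩
  rintro (a | a) (b | b) hab
  exacts [h.1 hab, hab.elim, hab.elim, h.2 hab]

theorem sumSetoid_sup (s s' : Setoid α) (t t' : Setoid β) :
    sumSetoid (s ⊔ s') (t ⊔ t') = sumSetoid s t ⊔ sumSetoid s' t' :=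
  gc_sumSetoid_comap.l_sup (a₁ := (s, t)) (a₂ := (s', t'))

def Setoid.comapOrderIso (e : α ≃ β) : Setoid β ≃o Setoid α where
  toFun := Setoid.comap e
  invFun := Setoid.comap e.symm
  left_inv s := by ext; simp [Setoid.comap_rel]
  right_inv s := by ext; simp [Setoid.comap_rel]
  map_rel_iff' {s t} := by
    refine ⟨fun h x y hxy => ?_, fun h x y hxy => h hxy⟩
    change Setoid.comap e s ≤ Setoid.comap e t at h
    simpa [Setoid.comap_rel] using h (x := e.symm x) (y := e.symm y) (by simpa [Setoid.comap_rel])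

theorem Setoid.comap_equiv_sup (e : α ≃ β) (s t : Setoid β) :
    Setoid.comap e (s ⊔ t) = Setoid.comap e s ⊔ Setoid.comap e t :=
  (Setoid.comapOrderIso e).map_sup s t

theorem nblocks_comap_equiv (e : α ≃ β) (s : Setoid β) :
    nblocks (Setoid.comap e s) = nblocks s :=
  Nat.card_congr (Quotient.congr e fun _ _ => Iff.rfl)

def quotSumEquiv (s : Setoid α) (t : Setoid β) :
    Quotient (sumSetoid s t) ≃ Quotient s ⊕ Quotient t where
  toFun := Quotient.lift (Sum.elim (Sum.inl ∘ Quotient.mk s) (Sum.inr ∘ Quotient.mk t)) <| by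
    rintro (a | a) (b | b) h
    exacts [congrArg Sum.inl (Quotient.sound h), h.elim, h.elim, congrArg Sum.inr (Quotient.sound h)]
  invFun := Sum.elim
    (Quotient.lift (Quotient.mk _ ∘ Sum.inl) fun _ _ h => Quotient.sound h)
    (Quotient.lift (Quotient.mk _ ∘ Sum.inr) fun _ _ h => Quotient.sound h)
  left_inv := by rintro ⟨a | a⟩ <;> rfl
  right_inv := by rintro (a | a) <;> induction a using Quotient.ind <;> rfl

theorem nblocks_sumSetoid [Finite α] [Finite β] (s : Setoid α) (t : Setoid β) :
    nblocks (sumSetoid s t) = nblocks s + nblocks t := by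
  rw [nblocks, Nat.card_congr (quotSumEquiv s t), Nat.card_sum, nblocks, nblocks]

def Setoid.blocksWithin (s : Setoid α) (P : α → Prop) : Set (Quotient s) :=
  {c | ∀ x, Quotient.mk s x = c → P x}

theorem Setoid.mk_mem_blocksWithin {s : Setoid α} {P : α → Prop} {a : α} :
    Quotient.mk s a ∈ s.blocksWithin P ↔ ∀ x, s x a → P x := by
  simp [blocksWithin, Quotient.eq]

theorem Setoid.card_blocksWithin_comap_equiv (e : α ≃ β) (s : Setoid β) (P : β → Prop) :
    Nat.card ((s.comap e).blocksWithin (P ∘ e)) = Nat.card (s.blocksWithin P) := by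
  refine Nat.card_congr (Equiv.subtypeEquiv (Quotient.congr e fun _ _ => Iff.rfl)
    (Quotient.ind fun a => ?_))
  simp only [Quotient.congr_mk, mk_mem_blocksWithin, comap_rel, Function.comp_apply]
  exact e.forall_congr_right (q := fun y => s y (e a) → P y)

theorem Setoid.card_blocksWithin_sumSetoid [Finite α] [Finite β] (s : Setoid α) (t : Setoid β)
    (P : α → Prop) (Q : β → Prop) :
    Nat.card ((sumSetoid s t).blocksWithin (Sum.elim P Q))
      = Nat.card (s.blocksWithin P) + Nat.card (t.blocksWithin Q) := by
  rw [← Nat.card_sum]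
  refine Nat.card_congr ((Equiv.subtypeEquiv (quotSumEquiv s t)
    (q := Sum.elim (· ∈ s.blocksWithin P) (· ∈ t.blocksWithin Q))
    (Quotient.ind ?_)).trans Equiv.subtypeSum)
  rintro (a | a) <;> simp [mk_mem_blocksWithin, quotSumEquiv, Sum.forall]
end

theorem Fin.castAdd_ne_natAdd {m n : ℕ} (i : Fin m) (j : Fin n) :
    Fin.castAdd n i ≠ Fin.natAdd m j := by
  simp only [ne_eq, Fin.ext_iff, Fin.val_castAdd, Fin.val_natAdd]; omega

variable {k l w k' l' w' : ℕ}

def tensorEquiv (k l k' l' : ℕ) : NCPt (k + k') (l + l') ≃ NCPt k l ⊕ NCPt k' l' :=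
  (Equiv.sumCongr finSumFinEquiv.symm finSumFinEquiv.symm).trans
    (Equiv.sumSumSumComm (Fin k) (Fin k') (Fin l) (Fin l'))

def glueEquiv (k l w k' l' w' : ℕ) :
    (NCPt (k + k') (l + l') ⊕ Fin (w + w')) ≃ ((NCPt k l ⊕ Fin w) ⊕ (NCPt k' l' ⊕ Fin w')) :=
  (Equiv.sumCongr (tensorEquiv k l k' l') finSumFinEquiv.symm).trans
    (Equiv.sumSumSumComm (NCPt k l) (NCPt k' l') (Fin w) (Fin w'))

@[simp] theorem tensorPartition_rel (p : Setoid (NCPt k l)) (p' : Setoid (NCPt k' l')) (x y) :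
    tensorPartition p p' x y ↔ sumSetoid p p' (tensorEquiv k l k' l' x) (tensorEquiv k l k' l' y) :=
  Iff.rfl

theorem sumSetoid_tensorPartition_discreteSetoid (p : Setoid (NCPt k l))
    (p' : Setoid (NCPt k' l')) :
    sumSetoid (tensorPartition p p') (discreteSetoid (Fin (w + w')))
      = Setoid.comap (glueEquiv k l w k' l' w')
          (sumSetoid (sumSetoid p (discreteSetoid (Fin w)))
            (sumSetoid p' (discreteSetoid (Fin w')))) := by
  ext x y
  obtain ⟨x, rfl⟩ := (glueEquiv k l w k' l' w').symm.surjective x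
  obtain ⟨y, rfl⟩ := (glueEquiv k l w k' l' w').symm.surjective y
  rcases x with (((i | j) | m) | ((i | j) | m)) <;>
    rcases y with (((i' | j') | m') | ((i' | j') | m')) <;>
    simp [glueEquiv, tensorEquiv, Setoid.comap_rel, Equiv.sumSumSumComm, Fin.castAdd_ne_natAdd,
      (Fin.castAdd_ne_natAdd _ _).symm]

theorem comap_sumAssoc_tensorPartition (q : Setoid (NCPt l w)) (q' : Setoid (NCPt l' w')) :
    Setoid.comap (Equiv.sumAssoc (Fin (k + k')) (Fin (l + l')) (Fin (w + w')))
        (sumSetoid (discreteSetoid (Fin (k + k'))) (tensorPartition q q'))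
      = Setoid.comap (glueEquiv k l w k' l' w')
          (sumSetoid
            (Setoid.comap (Equiv.sumAssoc (Fin k) (Fin l) (Fin w))
              (sumSetoid (discreteSetoid (Fin k)) q))
            (Setoid.comap (Equiv.sumAssoc (Fin k') (Fin l') (Fin w'))
              (sumSetoid (discreteSetoid (Fin k')) q'))) := by
  ext x y
  obtain ⟨x, rfl⟩ := (glueEquiv k l w k' l' w').symm.surjective x
  obtain ⟨y, rfl⟩ := (glueEquiv k l w k' l' w').symm.surjective y
  rcases x with (((i | j) | m) | ((i | j) | m)) <;>
    rcases y with (((i' | j') | m') | ((i' | j') | m')) <;>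
    simp [glueEquiv, tensorEquiv, Setoid.comap_rel, Equiv.sumSumSumComm, Fin.castAdd_ne_natAdd,
      (Fin.castAdd_ne_natAdd _ _).symm]

@[simp] theorem compPartition_rel (p : Setoid (NCPt k l)) (q : Setoid (NCPt l w)) (x y) :
    compPartition p q x y ↔ glue p q (Sum.map Sum.inl id x) (Sum.map Sum.inl id y) :=
  Iff.rfl

theorem cb_eq_card_blocksWithin (p : Setoid (NCPt k l)) (q : Setoid (NCPt l w)) :
    cb p q = Nat.card ((glue p q).blocksWithin fun x => ∃ j : Fin l, x = Sum.inl (Sum.inr j)) :=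
  rfl

theorem glue_tensorPartition (p : Setoid (NCPt k l)) (q : Setoid (NCPt l w))
    (p' : Setoid (NCPt k' l')) (q' : Setoid (NCPt l' w')) :
    glue (tensorPartition p p') (tensorPartition q q')
      = Setoid.comap (glueEquiv k l w k' l' w') (sumSetoid (glue p q) (glue p' q')) := by
  rw [glue, sumSetoid_tensorPartition_discreteSetoid, comap_sumAssoc_tensorPartition,
    ← Setoid.comap_equiv_sup, ← sumSetoid_sup, glue, glue]

theorem compPartition_tensorPartition (p : Setoid (NCPt k l)) (q : Setoid (NCPt l w))
    (p' : Setoid (NCPt k' l')) (q' : Setoid (NCPt l' w')) :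
    compPartition (tensorPartition p p') (tensorPartition q q')
      = tensorPartition (compPartition p q) (compPartition p' q') := by
  rw [compPartition, glue_tensorPartition]
  ext x y
  obtain ⟨x, rfl⟩ := (tensorEquiv k w k' w').symm.surjective x
  obtain ⟨y, rfl⟩ := (tensorEquiv k w k' w').symm.surjective y
  rcases x with ((i | m) | (i | m)) <;> rcases y with ((i' | m') | (i' | m')) <;>
    simp [glueEquiv, tensorEquiv, Setoid.comap_rel, Equiv.sumSumSumComm]

theorem nblocks_tensorPartition (p : Setoid (NCPt k l)) (p' : Setoid (NCPt k' l')) :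
    nblocks (tensorPartition p p') = nblocks p + nblocks p' :=
  (nblocks_comap_equiv (tensorEquiv k l k' l') (sumSetoid p p')).trans (nblocks_sumSetoid p p')

theorem cb_tensorPartition (p : Setoid (NCPt k l)) (q : Setoid (NCPt l w))
    (p' : Setoid (NCPt k' l')) (q' : Setoid (NCPt l' w')) :
    cb (tensorPartition p p') (tensorPartition q q') = cb p q + cb p' q' := by
  have middle_iff : (fun x => ∃ j : Fin (l + l'), x = Sum.inl (Sum.inr j))
      = Sum.elim (fun y => ∃ j : Fin l, y = Sum.inl (Sum.inr j))
          (fun y => ∃ j : Fin l', y = Sum.inl (Sum.inr j)) ∘ glueEquiv k l w k' l' w' := by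
    funext x
    obtain ⟨x, rfl⟩ := (glueEquiv k l w k' l' w').symm.surjective x
    rcases x with (((i | j) | m) | ((i | j) | m)) <;>
      simp [glueEquiv, tensorEquiv, Equiv.sumSumSumComm]
  rw [cb_eq_card_blocksWithin, glue_tensorPartition, middle_iff,
    Setoid.card_blocksWithin_comap_equiv, Setoid.card_blocksWithin_sumSetoid,
    ← cb_eq_card_blocksWithin, ← cb_eq_card_blocksWithin]

theorem cy_tensor_add_general {k l w k' l' w' : ℕ}
    (p : Setoid (NCPt k l)) (q : Setoid (NCPt l w))
    (p' : Setoid (NCPt k' l')) (q' : Setoid (NCPt l' w')) :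
    cy (tensorPartition p p') (tensorPartition q q') = cy p q + cy p' q' := by
  simp only [cy, compPartition_tensorPartition, nblocks_tensorPartition, cb_tensorPartition]
  push_cast
  ring

/-- The number of cycles `cy` is additive with respect to the tensor product
(horizontal concatenation) of noncrossing partitions:
`cy(p ⊗ p', q ⊗ q') = cy(p,q) + cy(p',q')`. -/
theorem cy_tensor_add {k l w k' l' w' : ℕ}
    (p : Setoid (NCPt k l)) (q : Setoid (NCPt l w))
    (p' : Setoid (NCPt k' l')) (q' : Setoid (NCPt l' w'))
    (hp : IsNoncrossing p) (hq : IsNoncrossing q)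
    (hp' : IsNoncrossing p') (hq' : IsNoncrossing q') :
    cy (tensorPartition p p') (tensorPartition q q') = cy p q + cy p' q' :=
  cy_tensor_add_general p q p' q'
end
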